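/- Let X = [0,1]^d, S a measurable space, μ a probability measure on X that is absolutely continuous with respect to Lebesgue measure with density g ∈ L²([0,1]^d), P a Markov kernel from X to S, r : X → ℝ and V : S → ℝ bounded measurable, TV = r + PV with (PV)(x) = ∫_S V dP(x), and ℰ(f) = ∫_X ∫_S (f(x) − r(x) − V(s'))² P(x)(ds') μ(dx). Let F be a nonempty class of bounded measurable functions X → ℝ. Then for every Q̂ ∈ F: ∫_X (Q̂ − TV)² dμ ≤ (ℰ(Q̂) − inf_{f ∈ F} ℰ(f)) + ‖g‖_{L²([0,1]^d)} · inf_{f ∈ F} ‖f − TV‖²_{L⁴([0,1]^d)}, where ‖h‖_{L⁴([0,1]^d)} = (∫_{[0,1]^d} |h(x)|⁴ dx)^{1/4} is taken with respect to Lebesgue measure. -/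

import Mathlib

open MeasureTheory ProbabilityTheory

private lemma integrable_of_abs_le {α : Type*} [MeasurableSpace α] {ν : Measure α}
    [IsFiniteMeasure ν] {f : α → ℝ} (hf : Measurable f) {C : ℝ} (hC : ∀ a, |f a| ≤ C) :
    Integrable f ν :=
  ⟨hf.aestronglyMeasurable,
    HasFiniteIntegral.of_bounded (C := C) (ae_of_all _ fun a => by simpa using hC a)⟩

private lemma abs_sq_sub_le {a b A B : ℝ} (ha : |a| ≤ A) (hb : |b| ≤ B) :
    |(a - b) ^ 2| ≤ (A + B) ^ 2 := by
  rw [abs_of_nonneg (sq_nonneg _), ← sq_abs]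
  have h : |a - b| ≤ A + B := by
    calc |a - b| = |a + -b| := by ring_nf
    _ ≤ |a| + |-b| := abs_add_le _ _
    _ ≤ A + B := by rw [abs_neg]; exact add_le_add ha hb
  exact pow_le_pow_left₀ (abs_nonneg _) h 2

/-- On `X = [0,1]^d` with `μ` absolutely continuous with respect to
Lebesgue measure with an `L²` density `g`, the squared `L²(μ)`-norm of the
temporal-difference error of `Q̂ ∈ F` is bounded by the excess expected risk plus
`‖g‖_{L²}` times the squared `L⁴`-approximation error (Lebesgue measure) of the
Bellman backup `TV = r + PV` by `F`. -/
theorem td_error_le_excess_risk_add_L4_approx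
    {d : ℕ} (hd : 0 < d) {S : Type*} [MeasurableSpace S]
    (μ : Measure (Fin d → ℝ)) [IsProbabilityMeasure μ]
    (g : (Fin d → ℝ) → ℝ) (hg : Measurable g) (hg0 : ∀ x, 0 ≤ g x)
    (hgL2 : MemLp g 2 (volume.restrict (Set.Icc (0 : Fin d → ℝ) 1)))
    (hμ : μ = (volume.restrict (Set.Icc (0 : Fin d → ℝ) 1)).withDensity
                (fun x => ENNReal.ofReal (g x)))
    (P : Kernel (Fin d → ℝ) S) [IsMarkovKernel P]
    (r : (Fin d → ℝ) → ℝ) (V : S → ℝ)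
    (hr : Measurable r) (hV : Measurable V)
    (Cr CV : ℝ) (hrb : ∀ x, |r x| ≤ Cr) (hVb : ∀ s, |V s| ≤ CV)
    (F : Set ((Fin d → ℝ) → ℝ)) (hFne : F.Nonempty)
    (hFmeas : ∀ f ∈ F, Measurable f)
    (hFbdd : ∀ f ∈ F, ∃ C : ℝ, ∀ x, |f x| ≤ C)
    (Q : (Fin d → ℝ) → ℝ) (hQF : Q ∈ F) :
    ∫ x, (Q x - (r x + ∫ s', V s' ∂(P x))) ^ 2 ∂μ
      ≤ ((∫ x, ∫ s', (Q x - r x - V s') ^ 2 ∂(P x) ∂μ)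
          - ⨅ f : F, ∫ x, ∫ s', (f.1 x - r x - V s') ^ 2 ∂(P x) ∂μ)
        + (∫ x in Set.Icc (0 : Fin d → ℝ) 1, (g x) ^ 2) ^ ((1 : ℝ) / 2)
          * ⨅ f : F, (∫ x in Set.Icc (0 : Fin d → ℝ) 1,
              |f.1 x - (r x + ∫ s', V s' ∂(P x))| ^ 4) ^ ((1 : ℝ) / 2) := by
  -- basic facts
  have hSne : Nonempty S := by
    by_contra h
    have h1 : (P 0) Set.univ = 1 := measure_univ
    rw [Set.univ_eq_empty_iff.mpr (not_nonempty_iff.mp h), measure_empty] at h1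
    exact zero_ne_one h1
  have hCV : 0 ≤ CV := (abs_nonneg _).trans (hVb (Classical.choice hSne))
  have hCr : 0 ≤ Cr := (abs_nonneg _).trans (hrb 0)
  -- the value function B = PV
  set B : (Fin d → ℝ) → ℝ := fun x => ∫ s', V s' ∂(P x) with hBdef
  have hVint : ∀ x, Integrable V (P x) := fun x => integrable_of_abs_le hV hVb
  have hBmeas : Measurable B := by
    have h : StronglyMeasurable (Function.uncurry fun (_ : Fin d → ℝ) (s : S) => V s) :=
      (hV.comp measurable_snd).stronglyMeasurable
    exact (h.integral_kernel_prod_right (κ := P)).measurable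
  have hBb : ∀ x, |B x| ≤ CV := by
    intro x
    rw [← Real.norm_eq_abs]
    calc ‖∫ s', V s' ∂(P x)‖ ≤ CV * ((P x) Set.univ).toReal :=
        norm_integral_le_of_norm_le_const (ae_of_all _ fun s => by simpa using hVb s)
    _ = CV := by simp
  -- the conditional variance term K
  set K : (Fin d → ℝ) → ℝ := fun x => ∫ s', (B x - V s') ^ 2 ∂(P x) with hKdef
  have hK2int : ∀ x, Integrable (fun s' => (B x - V s') ^ 2) (P x) := fun x =>
    integrable_of_abs_le ((measurable_const.sub hV).pow_const 2)
      (fun s => abs_sq_sub_le (hBb x) (hVb s))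
  have hKmeas : Measurable K := by
    have h : StronglyMeasurable (Function.uncurry fun (x : Fin d → ℝ) (s : S) => (B x - V s) ^ 2) :=
      (((hBmeas.comp measurable_fst).sub (hV.comp measurable_snd)).pow_const 2).stronglyMeasurable
    exact (h.integral_kernel_prod_right (κ := P)).measurable
  have hKb : ∀ x, |K x| ≤ (CV + CV) ^ 2 := by
    intro x
    rw [← Real.norm_eq_abs]
    calc ‖K x‖ ≤ (CV + CV) ^ 2 * ((P x) Set.univ).toReal :=
        norm_integral_le_of_norm_le_const (ae_of_all _ fun s => by
          simpa [Real.norm_eq_abs] using abs_sq_sub_le (hBb x) (hVb s))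
    _ = (CV + CV) ^ 2 := by simp
  have hKint : Integrable K μ := integrable_of_abs_le hKmeas hKb
  -- pointwise decomposition of the inner integral
  have hpoint : ∀ (f : (Fin d → ℝ) → ℝ) (x : Fin d → ℝ),
      ∫ s', (f x - r x - V s') ^ 2 ∂(P x) = (f x - (r x + B x)) ^ 2 + K x := by
    intro f x
    set a : ℝ := f x - r x - B x with hadef
    have heq : (fun s' => (f x - r x - V s') ^ 2)
        = fun s' => (a ^ 2 + 2 * a * (B x - V s')) + (B x - V s') ^ 2 := by
      funext s'; rw [hadef]; ring
    have hint1 : Integrable (fun s' => a ^ 2 + 2 * a * (B x - V s')) (P x) :=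
      (integrable_const _).add (((integrable_const (B x)).sub (hVint x)).const_mul (2 * a))
    have h0 : ∫ s', (B x - V s') ∂(P x) = 0 := by
      rw [integral_sub (integrable_const (B x)) (hVint x), integral_const]
      simp [hBdef]
    have h2 : ∫ s', (a ^ 2 + 2 * a * (B x - V s')) ∂(P x) = a ^ 2 := by
      rw [integral_add (f := fun _ => a ^ 2) (g := fun s' => 2 * a * (B x - V s'))
          (integrable_const _) (((integrable_const (B x)).sub (hVint x)).const_mul (2 * a)),
        integral_const_mul (2 * a) (fun s' => B x - V s'), h0, integral_const]
      simp
    have ha2 : (f x - (r x + B x)) ^ 2 = a ^ 2 := by rw [hadef]; ring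
    rw [heq, integral_add hint1 (hK2int x), h2, ha2]
  -- decomposition of the risk
  have hEdecomp : ∀ (f : (Fin d → ℝ) → ℝ), Measurable f → ∀ C : ℝ, (∀ x, |f x| ≤ C) →
      (∫ x, ∫ s', (f x - r x - V s') ^ 2 ∂(P x) ∂μ)
        = (∫ x, (f x - (r x + B x)) ^ 2 ∂μ) + ∫ x, K x ∂μ := by
    intro f hf C hCf
    have hfTV : Integrable (fun x => (f x - (r x + B x)) ^ 2) μ :=
      integrable_of_abs_le ((hf.sub (hr.add hBmeas)).pow_const 2)
        (fun x => abs_sq_sub_le (hCf x) ((abs_add_le _ _).trans (add_le_add (hrb x) (hBb x))))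
    calc (∫ x, ∫ s', (f x - r x - V s') ^ 2 ∂(P x) ∂μ)
        = ∫ x, ((f x - (r x + B x)) ^ 2 + K x) ∂μ := by
          exact integral_congr_ae (ae_of_all _ fun x => hpoint f x)
    _ = (∫ x, (f x - (r x + B x)) ^ 2 ∂μ) + ∫ x, K x ∂μ := integral_add hfTV hKint
  -- Lebesgue measure restricted to the cube
  set ν := volume.restrict (Set.Icc (0 : Fin d → ℝ) 1) with hνdef
  haveI hνfin : IsFiniteMeasure ν := by
    constructor
    rw [hνdef, Measure.restrict_apply_univ]
    exact isCompact_Icc.measure_lt_top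
  -- Cauchy–Schwarz step
  have hNG : (0:ℝ) ≤ (∫ x, (g x) ^ 2 ∂ν) ^ ((1:ℝ)/2) :=
    Real.rpow_nonneg (integral_nonneg fun x => sq_nonneg _) _
  have hCS : ∀ (f : (Fin d → ℝ) → ℝ), Measurable f → ∀ C : ℝ, (∀ x, |f x| ≤ C) →
      (∫ x, (f x - (r x + B x)) ^ 2 ∂μ)
        ≤ (∫ x, (g x) ^ 2 ∂ν) ^ ((1:ℝ)/2)
          * (∫ x, |f x - (r x + B x)| ^ 4 ∂ν) ^ ((1:ℝ)/2) := by
    intro f hf C hCf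
    set h : (Fin d → ℝ) → ℝ := fun x => (f x - (r x + B x)) ^ 2 with hhdef
    have hhmeas : Measurable h := (hf.sub (hr.add hBmeas)).pow_const 2
    have hhb : ∀ x, |h x| ≤ (C + (Cr + CV)) ^ 2 := fun x =>
      abs_sq_sub_le (hCf x) ((abs_add_le _ _).trans (add_le_add (hrb x) (hBb x)))
    have hh0 : ∀ x, 0 ≤ h x := fun x => sq_nonneg _
    -- rewrite the μ-integral as a density-weighted Lebesgue integral
    have h1 : (∫ x, h x ∂μ) = ∫ x, g x * h x ∂ν := by
      rw [hμ]
      have h2 : (∫ x, h x ∂(ν.withDensity fun x => ((fun x => (g x).toNNReal) x : ENNReal)))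
          = ∫ x, (g x).toNNReal • h x ∂ν :=
        integral_withDensity_eq_integral_smul hg.real_toNNReal h
      calc (∫ x, h x ∂(ν.withDensity fun x => ENNReal.ofReal (g x)))
          = ∫ x, (g x).toNNReal • h x ∂ν := h2
      _ = ∫ x, g x * h x ∂ν := by
          refine integral_congr_ae (ae_of_all _ fun x => ?_)
          show (g x).toNNReal • h x = g x * h x
          rw [NNReal.smul_def, Real.coe_toNNReal _ (hg0 x), smul_eq_mul]
    have hpq : Real.HolderConjugate 2 2 := Real.HolderConjugate.two_two
    have hgL2' : MemLp g (ENNReal.ofReal 2) ν := by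
      rw [show ENNReal.ofReal (2:ℝ) = 2 by norm_num]; exact hgL2
    have hhL2 : MemLp h (ENNReal.ofReal 2) ν := by
      rw [show ENNReal.ofReal (2:ℝ) = 2 by norm_num]
      exact (memLp_top_of_bound hhmeas.aestronglyMeasurable _
        (ae_of_all _ fun x => by simpa [Real.norm_eq_abs] using hhb x)).mono_exponent le_top
    have hH := integral_mul_le_Lp_mul_Lq_of_nonneg hpq (ae_of_all _ hg0) (ae_of_all _ hh0)
      hgL2' hhL2
    rw [h1]
    have e1 : (∫ x, g x ^ (2:ℝ) ∂ν) = ∫ x, (g x) ^ 2 ∂ν := by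
      refine integral_congr_ae (ae_of_all _ fun x => ?_)
      show g x ^ (2:ℝ) = (g x) ^ 2
      rw [show (2:ℝ) = ((2:ℕ):ℝ) by norm_num, Real.rpow_natCast]
    have e2 : (∫ x, h x ^ (2:ℝ) ∂ν) = ∫ x, |f x - (r x + B x)| ^ 4 ∂ν := by
      refine integral_congr_ae (ae_of_all _ fun x => ?_)
      show h x ^ (2:ℝ) = |f x - (r x + B x)| ^ 4
      rw [show (2:ℝ) = ((2:ℕ):ℝ) by norm_num, Real.rpow_natCast, hhdef,
        pow_abs, abs_of_nonneg (by positivity : (0:ℝ) ≤ (f x - (r x + B x)) ^ 4)]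
      ring
    rw [e1, e2] at hH
    exact hH
  -- nonnegativity and boundedness facts for the infima
  have hEnonneg : ∀ f : F, 0 ≤ ∫ x, ∫ s', (f.1 x - r x - V s') ^ 2 ∂(P x) ∂μ := fun f =>
    integral_nonneg fun x => integral_nonneg fun s => sq_nonneg _
  have hbddE : BddBelow (Set.range fun f : F =>
      ∫ x, ∫ s', (f.1 x - r x - V s') ^ 2 ∂(P x) ∂μ) :=
    ⟨0, by rintro _ ⟨f, rfl⟩; exact hEnonneg f⟩
  -- main chain
  haveI : Nonempty F := hFne.to_subtype
  rw [Real.mul_iInf_of_nonneg hNG, ← sub_le_iff_le_add']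
  refine le_ciInf fun f => ?_
  rw [sub_le_iff_le_add']
  obtain ⟨CQ, hCQ⟩ := hFbdd Q hQF
  obtain ⟨Cf, hCfb⟩ := hFbdd f.1 f.2
  have hdQ := hEdecomp Q (hFmeas Q hQF) CQ hCQ
  have hdf := hEdecomp f.1 (hFmeas f.1 f.2) Cf hCfb
  have h3 : (⨅ f : F, ∫ x, ∫ s', (f.1 x - r x - V s') ^ 2 ∂(P x) ∂μ)
      ≤ ∫ x, ∫ s', (f.1 x - r x - V s') ^ 2 ∂(P x) ∂μ := ciInf_le hbddE f
  have h4 := hCS f.1 (hFmeas f.1 f.2) Cf hCfb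
  linarith
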